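/- Let G be a Polish group and π : G → H a universally measurable homomorphism into a Polish group H which admits a compatible two-sided invariant metric. Then π is continuous. -/

import Mathlib

/-!
Suppose `π` is discontinuous at `1`: there are `ε > 0` and elements `g` arbitrarily close to `1`
with `d(π g, 1) ≥ ε`. Fix a complete metric on `G` and choose such `g₀, g₁, …` recursively, `gₖ`
moving each of the `2ᵏ` ordered products `∏_{i < k, sᵢ = 1} gᵢ` by less than `2⁻ᵏ` under right
multiplication. Then these products converge uniformly in `s ∈ 2^ℕ` to a continuous `φ s`.
Flipping the digit `sₙ` multiplies `φ s` on the left by a conjugate of `gₙ`, so by two-sided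
invariance `ψ = π ∘ φ` moves by at least `ε`.

On the other hand `ψ` is measurable for the Haar measure of the Cantor group `2^ℕ`, so by Lusin's
theorem it is continuous on a compact set `K` of measure `> 1/2`. Then `K` meets its translate by
every basis vector `eₙ`, and since `eₙ → 0`, continuity on `K` makes `d(ψ(s + eₙ), ψ s)` small for
suitable `s ∈ K`: a contradiction.
-/

open MeasureTheory Set

def UniversallyMeasurable {G : Type*} [MeasurableSpace G] (A : Set G) : Prop :=
  ∀ μ : Measure G, IsProbabilityMeasure μ → NullMeasurableSet A μ

open Filter Topology

theorem exists_seq_of_forall_fin_exists {α : Type*} {P : ∀ k, (Fin k → α) → α → Prop}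
    (h : ∀ k f, ∃ a, P k f a) : ∃ g : ℕ → α, ∀ k, P k (fun i => g i) (g k) := by
  choose next hnext using h
  let g : ℕ → α := Nat.strongRec fun k prev => next k fun i => prev i i.2
  refine ⟨g, fun k => ?_⟩
  rw [show g k = next k fun i => g i from Nat.strongRec_eq _ k]
  exact hnext k _

theorem eventually_dist_mul_lt {G : Type*} [Monoid G] [PseudoMetricSpace G] [ContinuousMul G]
    (z : G) {δ : ℝ} (hδ : 0 < δ) : ∀ᶠ y in 𝓝 1, dist z (z * y) < δ := by
  simpa only [dist_comm z] using
    ((continuous_const_mul z).tendsto' 1 z (mul_one z)).eventually (Metric.ball_mem_nhds z hδ)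

theorem tendsto_pi_single_atTop_nhds_zero {M : Type*} [TopologicalSpace M] [Zero M] (x : M) :
    Tendsto (fun n => (Pi.single n x : ℕ → M)) atTop (𝓝 0) := by
  refine tendsto_pi_nhds.2 fun i => tendsto_const_nhds.congr' ?_
  filter_upwards [eventually_gt_atTop i] with n hn
  simp [hn.ne]

section CantorProd

variable {G : Type*} [Monoid G]

def cantorProd (g : ℕ → G) (s : ℕ → ZMod 2) (k : ℕ) : G :=
  (List.ofFn fun i : Fin k => if s i = 0 then 1 else g i).prod

variable (g : ℕ → G) (s : ℕ → ZMod 2)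

theorem cantorProd_succ (k : ℕ) :
    cantorProd g s (k + 1) = cantorProd g s k * if s k = 0 then 1 else g k := by
  simp only [cantorProd, List.ofFn_succ', List.prod_concat, Fin.val_castSucc, Fin.val_last]

theorem cantorProd_congr {s' : ℕ → ZMod 2} {k : ℕ} (h : ∀ i < k, s i = s' i) :
    cantorProd g s k = cantorProd g s' k := by
  unfold cantorProd
  congr 1
  exact List.ofFn_inj.2 (funext fun i => by rw [h i i.2])

theorem continuous_cantorProd [TopologicalSpace G] [ContinuousMul G] (k : ℕ) :
    Continuous fun s => cantorProd g s k := by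
  induction k with
  | zero => exact continuous_const
  | succ k ih =>
    simp only [cantorProd_succ]
    exact ih.mul ((continuous_of_discreteTopology
      (f := fun v : ZMod 2 => if v = 0 then 1 else g k)).comp (continuous_apply k))

theorem exists_seq_dist_cantorProd_mul_lt [PseudoMetricSpace G] [ContinuousMul G] {S : Set G}
    (hS : ∃ᶠ x in 𝓝 1, x ∈ S) {δ : ℕ → ℝ} (hδ : ∀ k, 0 < δ k) :
    ∃ g : ℕ → G, (∀ k, g k ∈ S) ∧
      ∀ s k, dist (cantorProd g s k) (cantorProd g s k * g k) < δ k := by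
  obtain ⟨g, hg⟩ := exists_seq_of_forall_fin_exists
    (P := fun k (f : Fin k → G) a => a ∈ S ∧ ∀ t : Fin k → ZMod 2,
      dist (List.ofFn fun i => if t i = 0 then 1 else f i).prod
        ((List.ofFn fun i => if t i = 0 then 1 else f i).prod * a) < δ k)
    fun k f => (hS.and_eventually (eventually_all.2 fun t => eventually_dist_mul_lt _ (hδ k))).exists
  exact ⟨g, fun k => (hg k).1, fun s k => (hg k).2 fun i => s i⟩

end CantorProd

theorem cantorProd_add_single {G : Type*} [Group G] (g : ℕ → G) {s : ℕ → ZMod 2} {n : ℕ}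
    (hn : s n = 0) {k : ℕ} (hk : n < k) :
    cantorProd g (s + Pi.single n 1) k =
      cantorProd g s n * g n * (cantorProd g s n)⁻¹ * cantorProd g s k := by
  induction k, hk using Nat.le_induction with
  | base =>
    have : cantorProd g (s + Pi.single n 1) n = cantorProd g s n :=
      cantorProd_congr g _ fun i hi => by simp [Pi.single_eq_of_ne hi.ne]
    simp [cantorProd_succ, hn, this]
  | succ k hk ih =>
    simp [cantorProd_succ, ih, Pi.single_eq_of_ne (show k ≠ n by omega), mul_assoc]

section CantorLim

variable {G : Type*} [Group G] [MetricSpace G] {g : ℕ → G}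

noncomputable def cantorLim (g : ℕ → G) (s : ℕ → ZMod 2) : G :=
  limUnder atTop (cantorProd g s)

variable (hg : ∀ s k, dist (cantorProd g s k) (cantorProd g s k * g k) ≤ (1 / 2) ^ k)
include hg

theorem dist_cantorProd_succ_le (s : ℕ → ZMod 2) (k : ℕ) :
    dist (cantorProd g s k) (cantorProd g s (k + 1)) ≤ (1 / 2) ^ k := by
  rw [cantorProd_succ]
  split_ifs
  · rw [mul_one, dist_self]; positivity
  · exact hg s k

variable [CompleteSpace G]

theorem tendsto_cantorLim (s : ℕ → ZMod 2) :
    Tendsto (cantorProd g s) atTop (𝓝 (cantorLim g s)) :=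
  (cauchySeq_of_le_geometric (1 / 2) 1 (by norm_num)
    fun k => by simpa using dist_cantorProd_succ_le hg s k).tendsto_limUnder

theorem dist_cantorProd_cantorLim_le (s : ℕ → ZMod 2) (k : ℕ) :
    dist (cantorProd g s k) (cantorLim g s) ≤ 2 * (1 / 2) ^ k :=
  calc dist (cantorProd g s k) (cantorLim g s) ≤ 1 * (1 / 2) ^ k / (1 - 1 / 2) :=
        dist_le_of_le_geometric_of_tendsto (1 / 2) 1 (by norm_num)
          (fun k => by simpa using dist_cantorProd_succ_le hg s k) (tendsto_cantorLim hg s) k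
    _ = 2 * (1 / 2) ^ k := by ring

theorem continuous_cantorLim [IsTopologicalGroup G] : Continuous (cantorLim g) := by
  refine TendstoUniformly.continuous (F := fun k s => cantorProd g s k) (p := atTop) ?_
    (Eventually.of_forall (continuous_cantorProd g)).frequently
  rw [Metric.tendstoUniformly_iff]
  intro ε hε
  have h2 : Tendsto (fun k : ℕ => 2 * (1 / 2 : ℝ) ^ k) atTop (𝓝 0) := by
    simpa using (tendsto_pow_atTop_nhds_zero_of_lt_one (r := (1 / 2 : ℝ)) (by norm_num)
      (by norm_num)).const_mul 2
  filter_upwards [h2.eventually (gt_mem_nhds hε)] with k hk s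
  rw [dist_comm]
  exact (dist_cantorProd_cantorLim_le hg s k).trans_lt hk

theorem cantorLim_add_single [IsTopologicalGroup G] {s : ℕ → ZMod 2} {n : ℕ} (hn : s n = 0) :
    cantorLim g (s + Pi.single n 1) =
      cantorProd g s n * g n * (cantorProd g s n)⁻¹ * cantorLim g s := by
  refine tendsto_nhds_unique (tendsto_cantorLim hg _) ?_
  refine ((tendsto_cantorLim hg s).const_mul _).congr' ?_
  filter_upwards [eventually_gt_atTop n] with k hk
  exact (cantorProd_add_single g hn hk).symm

end CantorLim

theorem dist_conj_mul_self {H : Type*} [Group H] [PseudoMetricSpace H] [IsIsometricSMul H H]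
    [IsIsometricSMul Hᵐᵒᵖ H] (a b x : H) : dist (a * b * a⁻¹ * x) x = dist b 1 :=
  calc dist (a * b * a⁻¹ * x) x = dist (a * b * a⁻¹ * x) (1 * x) := by rw [one_mul]
    _ = dist (a * b * a⁻¹ * a) (1 * a) := by rw [dist_mul_right, dist_mul_right]
    _ = dist (a * b) (a * 1) := by rw [inv_mul_cancel_right, one_mul, mul_one]
    _ = dist b 1 := dist_mul_left a b 1

theorem le_dist_map_cantorLim_add_single {G H : Type*} [Group G] [MetricSpace G]
    [CompleteSpace G] [IsTopologicalGroup G] [Group H] [PseudoMetricSpace H]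
    [IsIsometricSMul H H] [IsIsometricSMul Hᵐᵒᵖ H] (π : G →* H) {g : ℕ → G}
    (hg : ∀ s k, dist (cantorProd g s k) (cantorProd g s k * g k) ≤ (1 / 2) ^ k) {ε : ℝ}
    (hπg : ∀ k, ε ≤ dist (π (g k)) 1) (s : ℕ → ZMod 2) (n : ℕ) :
    ε ≤ dist (π (cantorLim g (s + Pi.single n 1))) (π (cantorLim g s)) := by
  have key : ∀ s : ℕ → ZMod 2, s n = 0 →
      ε ≤ dist (π (cantorLim g (s + Pi.single n 1))) (π (cantorLim g s)) := fun s hs => by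
    rw [cantorLim_add_single hg hs, map_mul, map_mul, map_mul, map_inv, dist_conj_mul_self]
    exact hπg n
  by_cases hs : s n = 0
  · exact key s hs
  · have hs' : (s + Pi.single n 1 : ℕ → ZMod 2) n = 0 := by
      have : ∀ x : ZMod 2, x ≠ 0 → x + 1 = 0 := by decide
      simpa using this _ hs
    have hss : s + Pi.single n 1 + Pi.single n 1 = s := by
      rw [add_assoc, ← Pi.single_add, show (1 : ZMod 2) + 1 = 0 from rfl, Pi.single_zero,
        add_zero]
    simpa only [hss, dist_comm] using key _ hs'

section Lusin

variable {X : Type*} [TopologicalSpace X] [MeasurableSpace X] {ν : Measure X} [IsFiniteMeasure ν]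
  [ν.OuterRegular]

theorem MeasureTheory.NullMeasurableSet.exists_isOpen_measure_symmDiff_lt {A : Set X}
    (hA : NullMeasurableSet A ν) {ε : ENNReal} (hε : ε ≠ 0) :
    ∃ U, IsOpen U ∧ ν (symmDiff U A) < ε := by
  obtain ⟨B, hBA, hB, hAB⟩ := hA.exists_measurable_superset_ae_eq
  obtain ⟨U, hBU, hU, -, hUB⟩ := hB.exists_isOpen_sdiff_lt (measure_ne_top ν B) hε
  refine ⟨U, hU, (measure_symmDiff_le U B A).trans_lt ?_⟩
  rwa [symmDiff_of_ge hBU, measure_symmDiff_eq_zero_iff.2 hAB, add_zero]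

theorem exists_isClosed_measure_compl_lt_forall_exists_isOpen_inter_eq {ι : Type*}
    [Countable ι] {A : ι → Set X} (hA : ∀ i, NullMeasurableSet (A i) ν) {ε : ENNReal}
    (hε : ε ≠ 0) : ∃ K, IsClosed K ∧ ν Kᶜ < ε ∧ ∀ i, ∃ U, IsOpen U ∧ A i ∩ K = U ∩ K := by
  obtain ⟨δ, hδ, hδε⟩ := ENNReal.exists_pos_sum_of_countable hε ι
  choose U hU hUA using fun i =>
    (hA i).exists_isOpen_measure_symmDiff_lt (ENNReal.coe_ne_zero.2 (hδ i).ne')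
  obtain ⟨W, hW, hWo, hWε⟩ := Set.exists_isOpen_lt_of_lt (⋃ i, symmDiff (U i) (A i)) ε <|
    calc ν (⋃ i, symmDiff (U i) (A i)) ≤ ∑' i, ν (symmDiff (U i) (A i)) := measure_iUnion_le _
      _ ≤ ∑' i, (δ i : ENNReal) := ENNReal.tsum_le_tsum fun i => (hUA i).le
      _ < ε := hδε
  refine ⟨Wᶜ, hWo.isClosed_compl, by rwa [compl_compl], fun i => ⟨U i, hU i, ?_⟩⟩
  ext x
  simp only [mem_inter_iff, mem_compl_iff]
  refine and_congr_left fun hxW => ?_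
  have hx : x ∉ symmDiff (U i) (A i) := fun hx => hxW (hW (mem_iUnion_of_mem i hx))
  rw [Set.mem_symmDiff] at hx
  tauto

theorem exists_isClosed_measure_compl_lt_continuousOn {Y : Type*} [TopologicalSpace Y]
    [SecondCountableTopology Y] {f : X → Y}
    (hf : ∀ U, IsOpen U → NullMeasurableSet (f ⁻¹' U) ν) {ε : ENNReal} (hε : ε ≠ 0) :
    ∃ K, IsClosed K ∧ ν Kᶜ < ε ∧ ContinuousOn f K := by
  have hB := TopologicalSpace.isBasis_countableBasis Y
  have : Countable (TopologicalSpace.countableBasis Y) :=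
    (TopologicalSpace.countable_countableBasis Y).to_subtype
  obtain ⟨K, hK, hKε, hKf⟩ := exists_isClosed_measure_compl_lt_forall_exists_isOpen_inter_eq
    (A := fun b : TopologicalSpace.countableBasis Y => f ⁻¹' b)
    (fun b => hf b (hB.isOpen b.2)) hε
  exact ⟨K, hK, hKε, hB.continuousOn_iff.2 fun b hb => hKf ⟨b, hb⟩⟩

end Lusin

theorem UniversallyMeasurable.nullMeasurableSet_preimage {X Y : Type*} [MeasurableSpace X]
    [MeasurableSpace Y] {A : Set Y} (hA : UniversallyMeasurable A) {f : X → Y}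
    (hf : Measurable f) (ν : Measure X) [IsProbabilityMeasure ν] :
    NullMeasurableSet (f ⁻¹' A) ν :=
  (hA _ (Measure.isProbabilityMeasure_map hf.aemeasurable)).preimage (hf.quasiMeasurePreserving ν)

instance MeasureTheory.Measure.isProbabilityMeasure_addHaarMeasure_top {G : Type*} [AddGroup G]
    [TopologicalSpace G] [IsTopologicalAddGroup G] [CompactSpace G] [Nonempty G]
    [MeasurableSpace G] [BorelSpace G] :
    IsProbabilityMeasure (Measure.addHaarMeasure (⊤ : TopologicalSpace.PositiveCompacts G)) :=
  ⟨by simpa using Measure.addHaarMeasure_self (K₀ := (⊤ : TopologicalSpace.PositiveCompacts G))⟩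

theorem exists_mem_add_mem_of_measure_compl_lt {X : Type*} [MeasurableSpace X] [AddGroup X]
    [MeasurableAdd X] {ν : Measure X} [IsProbabilityMeasure ν] [ν.IsAddLeftInvariant]
    {K : Set X} (hK : ν Kᶜ < 1 / 2) (g : X) : ∃ x ∈ K, g + x ∈ K := by
  have hL : ν ((g + ·) ⁻¹' K)ᶜ < 1 / 2 := by rwa [← preimage_compl, measure_preimage_add]
  have : ν (K ∩ (g + ·) ⁻¹' K)ᶜ < 1 :=
    calc ν (K ∩ (g + ·) ⁻¹' K)ᶜ ≤ ν Kᶜ + ν ((g + ·) ⁻¹' K)ᶜ := by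
          rw [compl_inter]; exact measure_union_le _ _
      _ < 1 / 2 + 1 / 2 := ENNReal.add_lt_add hK hL
      _ = 1 := ENNReal.add_halves 1
  obtain ⟨x, hxK, hgxK⟩ : (K ∩ (g + ·) ⁻¹' K).Nonempty := by
    refine nonempty_iff_ne_empty.2 fun h => ?_
    rw [h, compl_empty, measure_univ] at this
    exact lt_irrefl _ this
  exact ⟨x, hxK, hgxK⟩

theorem IsCompact.exists_dist_add_lt {X Y : Type*} [TopologicalSpace X] [AddZeroClass X]
    [ContinuousAdd X] [FirstCountableTopology X] [PseudoMetricSpace Y] {K : Set X}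
    (hK : IsCompact K) {f : X → Y} (hf : ContinuousOn f K) {e x : ℕ → X}
    (he : Tendsto e atTop (𝓝 0)) (hx : ∀ n, x n ∈ K) (hex : ∀ n, e n + x n ∈ K) {ε : ℝ}
    (hε : 0 < ε) : ∃ n, dist (f (e n + x n)) (f (x n)) < ε := by
  obtain ⟨a, haK, σ, hσ, hxa⟩ := hK.tendsto_subseq hx
  have hexa : Tendsto (fun k => e (σ k) + x (σ k)) atTop (𝓝 a) := by
    simpa using (he.comp hσ.tendsto_atTop).add hxa
  have hfa {u : ℕ → X} (hu : Tendsto u atTop (𝓝 a)) (huK : ∀ k, u k ∈ K) :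
      Tendsto (f ∘ u) atTop (𝓝 (f a)) :=
    (hf a haK).tendsto.comp (tendsto_nhdsWithin_iff.2 ⟨hu, Eventually.of_forall huK⟩)
  have hdist := (hfa hexa fun k => hex (σ k)).dist (hfa hxa fun k => hx (σ k))
  rw [dist_self] at hdist
  obtain ⟨k, hk⟩ := (hdist.eventually (gt_mem_nhds hε)).exists
  exact ⟨σ k, hk⟩

/-- Christensen's theorem: a universally measurable homomorphism into a Polish group
with a compatible two-sided invariant metric is continuous. -/
theorem christensen_automatic_continuity
    {G : Type*} [Group G] [TopologicalSpace G] [IsTopologicalGroup G] [PolishSpace G]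
    [MeasurableSpace G] [BorelSpace G]
    {H : Type*} [Group H] [MetricSpace H] [IsTopologicalGroup H] [PolishSpace H]
    (hbi : ∀ a b x : H, dist (x * a) (x * b) = dist a b ∧ dist (a * x) (b * x) = dist a b)
    (π : G →* H)
    (hπ : ∀ U : Set H, IsOpen U → UniversallyMeasurable (π ⁻¹' U)) :
    Continuous π := by
  refine continuous_of_continuousAt_one π ?_
  by_contra hπ1
  obtain ⟨ε, hε, hS⟩ : ∃ ε > 0, ∃ᶠ x in 𝓝 1, ε ≤ dist (π x) 1 := by
    simpa [ContinuousAt, Metric.tendsto_nhds] using hπ1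
  let := TopologicalSpace.upgradeIsCompletelyMetrizable G
  have : IsIsometricSMul H H := ⟨fun c => Isometry.of_dist_eq fun a b => (hbi a b c).1⟩
  have : IsIsometricSMul Hᵐᵒᵖ H := ⟨fun c => Isometry.of_dist_eq fun a b => (hbi a b c.unop).2⟩
  obtain ⟨g, hgS, hg⟩ := exists_seq_dist_cantorProd_mul_lt hS (δ := fun k => (1 / 2 : ℝ) ^ k)
    fun k => by positivity
  replace hg s k := (hg s k).le
  let ν : Measure (ℕ → ZMod 2) := Measure.addHaarMeasure ⊤
  obtain ⟨K, hK, hνK, hψK⟩ := exists_isClosed_measure_compl_lt_continuousOn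
    (f := π ∘ cantorLim g) (ε := 1 / 2)
    (fun U hU => (hπ U hU).nullMeasurableSet_preimage (continuous_cantorLim hg).measurable ν)
    (by norm_num)
  choose x hxK hxK' using fun n => exists_mem_add_mem_of_measure_compl_lt hνK (Pi.single n 1)
  obtain ⟨n, hn⟩ :=
    hK.isCompact.exists_dist_add_lt hψK (tendsto_pi_single_atTop_nhds_zero 1) hxK hxK' hε
  rw [add_comm] at hn
  exact (le_dist_map_cantorLim_add_single π hg hgS (x n) n).not_gt hn
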